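/- Let A and B be m×m dual complex matrices with A invertible (there exists A⁻¹ with A·A⁻¹ = A⁻¹·A = I), let N_B be an NDMPI of B and Z an NDMPI of A·B. If N_B·(A·B)·B* = A·B*, B·N_B·A·B = A·B, and A·B·Z·B = B, then Z = A⁻¹·N_B. -/

import Mathlib

open Matrix

/-- The dual complex numbers ℂ[ε] with ε² = 0 (dual numbers over ℂ). -/
abbrev DualComplex := DualNumber ℂ

/-- Conjugation on dual complex numbers: star (a + b·ε) = (conj a) + (conj b)·ε. -/
noncomputable instance : StarRing DualComplex where
  star x := ⟨star x.fst, star x.snd⟩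
  star_involutive x := TrivSqZeroExt.ext (star_star x.fst) (star_star x.snd)
  star_mul x y := TrivSqZeroExt.ext
    (by simp [TrivSqZeroExt.fst_mul, mul_comm]; exact mul_comm _ _)
    (by simp [TrivSqZeroExt.snd_mul]; erw [TrivSqZeroExt.snd_mul]; simp; ring)
  star_add x y := TrivSqZeroExt.ext (by simp; rfl) (by simp; rfl)

/-- `X` is a new dual Moore–Penrose inverse (NDMPI) of `M`:
`M*·M·X·M·M* = M*·M·M*`, `X·M·X = X`, `(M·X)* = M·X`, `(X·M)* = X·M`. -/
def IsNDMPI {m n : ℕ} (M : Matrix (Fin m) (Fin n) DualComplex)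
    (X : Matrix (Fin n) (Fin m) DualComplex) : Prop :=
  Mᴴ * M * X * M * Mᴴ = Mᴴ * M * Mᴴ ∧
  X * M * X = X ∧
  (M * X)ᴴ = M * X ∧
  (X * M)ᴴ = X * M

/-!
Write `P = A·B·Z` and `Q = B·N_B`; both are self-adjoint, and the hypotheses give
`P·Q = Q` and `Q·P = P`, so `P = Q`. Moreover `Z = (A·B)*·Z*·Z`, which together with
`N_B·(A·B)·B* = A·B*` gives `N_B·A·B·Z = A·Z`. Hence
`Z = A⁻¹·N_B·(A·B·Z) = A⁻¹·N_B·B·N_B = A⁻¹·N_B`.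
-/

theorem IsSelfAdjoint.eq_of_mul_eq_of_mul_eq {R : Type*} [Mul R] [StarMul R] {p q : R}
    (hp : IsSelfAdjoint p) (hq : IsSelfAdjoint q) (hpq : p * q = q) (hqp : q * p = p) :
    p = q :=
  calc p = q * p := hqp.symm
    _ = star (p * q) := by rw [star_mul, hp.star_eq, hq.star_eq]
    _ = q := by rw [hpq, hq.star_eq]

section Semigroup

variable {R : Type*} [Semigroup R] [StarMul R]

theorem eq_star_mul_star_mul_of_isSelfAdjoint_mul {x a : R} (hxa : IsSelfAdjoint (x * a))
    (hx : x * a * x = x) : x = star a * star x * x :=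
  calc x = x * a * x := hx.symm
    _ = star (x * a) * x := by rw [hxa.star_eq]
    _ = star a * star x * x := by rw [star_mul]

theorem mul_eq_mul_mul_of_isSelfAdjoint {a b n z : R} (hbn : IsSelfAdjoint (b * n))
    (habz : IsSelfAdjoint (a * b * z)) (h2 : b * n * a * b = a * b) (h3 : a * b * z * b = b) :
    b * n = a * b * z := by
  refine (habz.eq_of_mul_eq_of_mul_eq hbn ?_ ?_).symm
  · rw [← mul_assoc, h3]
  · simp only [← mul_assoc, h2]

theorem mul_mul_mul_eq_mul_of_mul_star_eq {a b n z : R} (hzab : IsSelfAdjoint (z * (a * b)))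
    (hz : z * (a * b) * z = z) (h1 : n * (a * b) * star b = a * star b) :
    n * (a * b) * z = a * z := by
  have hz' : z = star b * (star a * star z * z) := by
    conv_lhs => rw [eq_star_mul_star_mul_of_isSelfAdjoint_mul hzab hz]
    simp only [star_mul, mul_assoc]
  calc n * (a * b) * z = n * (a * b) * star b * (star a * star z * z) := by
        rw [mul_assoc _ (star b), ← hz']
    _ = a * z := by rw [h1, mul_assoc, ← hz']

end Semigroup

theorem eq_inv_mul_of_isSelfAdjoint {R : Type*} [Monoid R] [StarMul R] {a ainv b n z : R}
    (ha : ainv * a = 1) (hn : n * b * n = n) (hbn : IsSelfAdjoint (b * n))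
    (hz : z * (a * b) * z = z) (habz : IsSelfAdjoint (a * b * z))
    (hzab : IsSelfAdjoint (z * (a * b)))
    (h1 : n * (a * b) * star b = a * star b) (h2 : b * n * a * b = a * b)
    (h3 : a * b * z * b = b) :
    z = ainv * n :=
  calc z = ainv * (a * z) := by rw [← mul_assoc, ha, one_mul]
    _ = ainv * (n * (a * b * z)) := by
        rw [← mul_mul_mul_eq_mul_of_mul_star_eq hzab hz h1, mul_assoc n (a * b)]
    _ = ainv * n := by rw [← mul_eq_mul_mul_of_isSelfAdjoint hbn habz h2 h3, ← mul_assoc n, hn]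

theorem stmt_17_general {m : ℕ} (A B : Matrix (Fin m) (Fin m) DualComplex)
    (Ainv : Matrix (Fin m) (Fin m) DualComplex)
    (hA2 : Ainv * A = 1)
    (NB : Matrix (Fin m) (Fin m) DualComplex) (hNB : IsNDMPI B NB)
    (Z : Matrix (Fin m) (Fin m) DualComplex) (hZ : IsNDMPI (A * B) Z)
    (h1 : NB * (A * B) * Bᴴ = A * Bᴴ)
    (h2 : B * NB * A * B = A * B)
    (h3 : A * B * Z * B = B) :
    Z = Ainv * NB := by
  obtain ⟨-, hB2, hB3, -⟩ := hNB
  obtain ⟨-, hZ2, hZ3, hZ4⟩ := hZ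
  rw [← star_eq_conjTranspose] at h1
  exact eq_inv_mul_of_isSelfAdjoint hA2 hB2 (isHermitian_iff_isSelfAdjoint.mp hB3) hZ2
    (isHermitian_iff_isSelfAdjoint.mp hZ3) (isHermitian_iff_isSelfAdjoint.mp hZ4) h1 h2 h3

/-- If `A` is invertible with inverse `Ainv`, `N_B·(A·B)·B* = A·B*`,
`B·N_B·A·B = A·B` and `A·B·Z·B = B` (where `Z` is an NDMPI of `A·B`),
then `Z = A⁻¹·N_B`. -/
theorem stmt_17 {m : ℕ} (A B : Matrix (Fin m) (Fin m) DualComplex)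
    (Ainv : Matrix (Fin m) (Fin m) DualComplex)
    (hA1 : A * Ainv = 1) (hA2 : Ainv * A = 1)
    (NB : Matrix (Fin m) (Fin m) DualComplex) (hNB : IsNDMPI B NB)
    (Z : Matrix (Fin m) (Fin m) DualComplex) (hZ : IsNDMPI (A * B) Z)
    (h1 : NB * (A * B) * Bᴴ = A * Bᴴ)
    (h2 : B * NB * A * B = A * B)
    (h3 : A * B * Z * B = B) :
    Z = Ainv * NB :=
  stmt_17_general A B Ainv hA2 NB hNB Z hZ h1 h2 h3
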